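/- arXiv:2304.07818 — 2 statements merged into one kernel-verified Lean document; each statement's English description precedes it below -/
import Mathlib

section
/- Under the stated hypotheses, for every natural number j one has M_D(0, β+j) = M_D(0, j) · M_C(jτ, α). -/
/-!
Since `φ` shifts both sequences by one, the identity `M_D(0, β) = M_C(0, α)` given by the base
hypothesis propagates to `M_D(s, β) = M_C(s, α)` for every start `s`. Peeling the last factor off
`M_D(0, β + j + 1)` and regrouping `M_C(jτ, α) · D_{(β+j)τ} = M_D(jτ, β + 1) = D_{jτ} · M_D((j+1)τ, β)`
then gives the induction step.
-/

/-- The ordered product `D_j · D_{j+τ} ⋯ D_{j+(k-1)τ}`. -/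
def chainProd {G : Type*} [Group G] (D : ℕ → G) (τ j k : ℕ) : G :=
  ((List.range k).map fun i => D (j + i * τ)).prod

section ChainProd

variable {G : Type*} [Group G]

lemma chainProd_zero (D : ℕ → G) (τ j : ℕ) : chainProd D τ j 0 = 1 := rfl

lemma chainProd_succ (D : ℕ → G) (τ j k : ℕ) :
    chainProd D τ j (k + 1) = chainProd D τ j k * D (j + k * τ) := by
  simp [chainProd, List.range_succ]

lemma chainProd_succ' (D : ℕ → G) (τ j k : ℕ) :
    chainProd D τ j (k + 1) = D j * chainProd D τ (j + τ) k := by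
  simp only [chainProd, List.range_succ_eq_map, List.map_cons, List.prod_cons, List.map_map]
  congr 1
  · simp
  · refine congrArg List.prod (List.map_congr_left fun i _ => ?_)
    simp only [Function.comp_apply, Nat.succ_mul]
    congr 1
    ring

lemma map_chainProd_of_map_succ (φ : G →* G) {D : ℕ → G} (hD : ∀ j, φ (D j) = D (j + 1))
    (τ j k : ℕ) : φ (chainProd D τ j k) = chainProd D τ (j + 1) k := by
  simp only [chainProd, map_list_prod, List.map_map]
  refine congrArg List.prod (List.map_congr_left fun i _ => ?_)
  simp only [Function.comp_apply, hD]
  congr 1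
  ring

lemma chainProd_eq_of_map_succ (φ : G →* G) {D C : ℕ → G}
    (hD : ∀ j, φ (D j) = D (j + 1)) (hC : ∀ j, φ (C j) = C (j + 1)) {τ τc β α : ℕ}
    (h : chainProd D τ 0 β = chainProd C τc 0 α) (s : ℕ) :
    chainProd D τ s β = chainProd C τc s α := by
  induction s with
  | zero => exact h
  | succ s ih =>
    rw [← map_chainProd_of_map_succ φ hD, ← map_chainProd_of_map_succ φ hC, ih]

lemma chainProd_add_of_forall_eq {D C : ℕ → G} {τ τc β α : ℕ}
    (h : ∀ s, chainProd D τ s β = chainProd C τc s α) (j : ℕ) :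
    chainProd D τ 0 (β + j) = chainProd D τ 0 j * chainProd C τc (j * τ) α := by
  induction j with
  | zero => rw [Nat.add_zero, chainProd_zero, one_mul, Nat.zero_mul, h]
  | succ j ih =>
    calc chainProd D τ 0 (β + (j + 1))
        = chainProd D τ 0 j * (chainProd C τc (j * τ) α * D (j * τ + β * τ)) := by
          rw [← Nat.add_assoc, chainProd_succ, ih, mul_assoc, Nat.zero_add, add_mul, add_comm]
      _ = chainProd D τ 0 j * chainProd D τ (j * τ) (β + 1) := by
          rw [← h, chainProd_succ]
      _ = chainProd D τ 0 (j + 1) * chainProd C τc ((j + 1) * τ) α := by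
          rw [chainProd_succ', h, chainProd_succ, Nat.zero_add, mul_assoc, add_mul, one_mul]

end ChainProd

theorem stmt_5_general {G : Type*} [Group G] (φ : G →* G) (D C : ℕ → G)
    (hD : ∀ j, φ (D j) = D (j + 1)) (hC : ∀ j, φ (C j) = C (j + 1))
    (β τ τc α : ℕ) (hβ : 2 ≤ β)
    (hbase : D ((β - 1) * τ) = (chainProd D τ 0 (β - 1))⁻¹ * chainProd C τc 0 α) :
    ∀ j : ℕ, chainProd D τ 0 (β + j) = chainProd D τ 0 j * chainProd C τc (j * τ) α := by
  have hprod : chainProd D τ 0 β = chainProd C τc 0 α := by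
    rw [← Nat.sub_add_cancel (by omega : 1 ≤ β), chainProd_succ, Nat.zero_add, hbase,
      mul_inv_cancel_left]
  exact chainProd_add_of_forall_eq (chainProd_eq_of_map_succ φ hD hC hprod)

theorem stmt_5 {G : Type*} [Group G] (φ : G →* G) (D C : ℕ → G)
    (hD : ∀ j, φ (D j) = D (j + 1)) (hC : ∀ j, φ (C j) = C (j + 1))
    (β τ τc α : ℕ) (hβ : 2 ≤ β) (hτ : 0 < τ) (hτc : 0 < τc) (hα : 0 < α)
    (hcomp : α * τc = β * τ)
    (hbase : D ((β - 1) * τ) = (chainProd D τ 0 (β - 1))⁻¹ * chainProd C τc 0 α) :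
    ∀ j : ℕ, chainProd D τ 0 (β + j) = chainProd D τ 0 j * chainProd C τc (j * τ) α :=
  stmt_5_general φ D C hD hC β τ τc α hβ hbase
end

section
/- Under the stated hypotheses, for all natural numbers i, j, k one has M_D(i, kβ + j) = M_D(i, j) · M_C(jτ + i, kα). -/
lemma chainProd_add {G : Type*} [Group G] (D : ℕ → G) (τ j m n : ℕ) :
    chainProd D τ j (m + n) = chainProd D τ j m * chainProd D τ (j + m * τ) n := by
  unfold chainProd
  rw [List.range_add, List.map_append, List.prod_append, List.map_map]
  congr 1
  refine congrArg (fun l : List G => l.prod) (List.map_congr_left fun i _ => ?_)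
  simp only [Function.comp_apply]
  congr 1
  ring

lemma chainProd_one {G : Type*} [Group G] (D : ℕ → G) (τ j : ℕ) :
    chainProd D τ j 1 = D j := by
  simp [chainProd, List.range_succ]

lemma chainProd_shift {G : Type*} [Group G] (φ : G →* G) (D : ℕ → G)
    (hD : ∀ j, φ (D j) = D (j + 1)) (τ j k : ℕ) :
    φ (chainProd D τ j k) = chainProd D τ (j + 1) k := by
  unfold chainProd
  rw [map_list_prod, List.map_map]
  congr 1
  apply List.map_congr_left
  intro i _
  simp only [Function.comp_apply]
  rw [hD]
  congr 1
  omega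

theorem stmt_6 {G : Type*} [Group G] (φ : G →* G) (D C : ℕ → G)
    (hD : ∀ j, φ (D j) = D (j + 1)) (hC : ∀ j, φ (C j) = C (j + 1))
    (β τ τc α : ℕ) (hβ : 2 ≤ β) (hτ : 0 < τ) (hτc : 0 < τc) (hα : 0 < α)
    (hcomp : α * τc = β * τ)
    (hbase : D ((β - 1) * τ) = (chainProd D τ 0 (β - 1))⁻¹ * chainProd C τc 0 α) :
    ∀ i j k : ℕ, chainProd D τ i (k * β + j) =
      chainProd D τ i j * chainProd C τc (j * τ + i) (k * α) := by
  have key : ∀ i, chainProd D τ i β = chainProd C τc i α := by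
    have h0 : chainProd D τ 0 β = chainProd C τc 0 α := by
      have hb : β = (β - 1) + 1 := by omega
      rw [hb, chainProd_add, chainProd_one, Nat.zero_add, hbase]
      group
    intro i
    induction i with
    | zero => exact h0
    | succ n ih =>
      rw [← chainProd_shift φ D hD, ← chainProd_shift φ C hC, ih]
  intro i j k
  induction k with
  | zero => simp [chainProd]
  | succ n ih =>
    have h1 : (n + 1) * β + j = (n * β + j) + β := by ring
    have h2 : (n + 1) * α = n * α + α := by ring
    rw [h1, chainProd_add, ih, h2, chainProd_add, mul_assoc]
    congr 2
    rw [key]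
    congr 1
    have h3 : n * α * τc = n * β * τ := by rw [mul_assoc, hcomp, mul_assoc]
    rw [h3]
    ring
end
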